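/- Let γ ∈ ℝ with γ ∉ {−8, 0}. There exists a constant C > 0 (depending only on γ) such that |G(x,t)| ≤ C (1+|t|)^{−1/3} for all x ∈ ℤ and all t ∈ ℝ. -/

import Mathlib

/-!
Write `G1 γ x t = (2π)⁻¹ ∫ exp(i (x ξ + t ω(ξ))) dξ` with `ω(ξ) = (2 - 2 cos ξ)² + γ (2 - 2 cos ξ)`.
The second and third derivatives of `ω` have no common zero exactly when `γ ∉ {0, -8}`, so by
compactness `[-π, π]` splits into a fixed number of intervals on each of which `|ω''| ≥ c` or
`|ω'''| ≥ c`. There the phase has second or third derivative of size at least `c |t|`, whatever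
`x` is, and van der Corput's lemma bounds each piece by `O((c |t|)^(-1/3))`. For small `|t|` the
trivial bound `‖G1 γ x t‖ ≤ 1` is enough.
-/

open MeasureTheory

/-- The fundamental solution of the discrete fourth-order Schrödinger equation
`i∂ₜu + Δ²u − γΔu = 0` on the lattice `ℤ`. -/
noncomputable def G1 (γ : ℝ) (x : ℤ) (t : ℝ) : ℂ :=
  (2 * Real.pi)⁻¹ * ∫ ξ in (-Real.pi)..Real.pi,
    Complex.exp (Complex.I *
      (((x : ℝ) * ξ + ((2 - 2 * Real.cos ξ) ^ 2 + γ * (2 - 2 * Real.cos ξ)) * t : ℝ) : ℂ))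

open intervalIntegral Set

theorem forall_le_or_forall_le_neg_of_le_abs {g : ℝ → ℝ} {a b δ : ℝ}
    (hg : ContinuousOn g (Icc a b)) (hδ : 0 < δ) (h : ∀ ξ ∈ Icc a b, δ ≤ |g ξ|) :
    (∀ ξ ∈ Icc a b, δ ≤ g ξ) ∨ (∀ ξ ∈ Icc a b, g ξ ≤ -δ) := by
  by_contra! hne
  obtain ⟨⟨p, hp, hgp⟩, ⟨q, hq, hgq⟩⟩ := hne
  have hgp' : g p ≤ -δ := by cases le_abs'.1 (h p hp) <;> linarith
  have hgq' : δ ≤ g q := by cases le_abs'.1 (h q hq) <;> linarith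
  obtain ⟨r, hr, hgr⟩ := intermediate_value_uIcc (hg.mono (uIcc_subset_Icc hp hq))
    (mem_uIcc.2 (Or.inl ⟨by linarith, by linarith⟩) : (0 : ℝ) ∈ uIcc (g p) (g q))
  have := h r (uIcc_subset_Icc hp hq hr)
  rw [hgr, abs_zero] at this
  linarith

theorem MonotoneOn.exists_level_crossing {ψ : ℝ → ℝ} {a b : ℝ} (v : ℝ)
    (hm : MonotoneOn ψ (Icc a b)) (hab : a ≤ b) (hc : ContinuousOn ψ (Icc a b)) :
    ∃ p ∈ Icc a b, (p = a ∨ ∀ ξ ∈ Icc a p, ψ ξ ≤ v) ∧ (p = b ∨ ∀ ξ ∈ Icc p b, v ≤ ψ ξ) := by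
  by_cases hva : v ≤ ψ a
  · exact ⟨a, left_mem_Icc.2 hab, Or.inl rfl,
      Or.inr fun ξ hξ => hva.trans (hm (left_mem_Icc.2 hab) hξ hξ.1)⟩
  by_cases hvb : ψ b ≤ v
  · exact ⟨b, right_mem_Icc.2 hab,
      Or.inr fun ξ hξ => (hm hξ (right_mem_Icc.2 hab) hξ.2).trans hvb, Or.inl rfl⟩
  rw [not_le] at hva hvb
  obtain ⟨p, hp, rfl⟩ := intermediate_value_Icc hab hc ⟨hva.le, hvb.le⟩
  exact ⟨p, hp, Or.inr fun ξ hξ => hm ⟨hξ.1, hξ.2.trans hp.2⟩ hp hξ.2,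
    Or.inr fun ξ hξ => hm hp ⟨hp.1.trans hξ.1, hξ.2⟩ hξ.1⟩

/-- `[p, q]` contains `{ξ ∈ [a, b] | |ψ ξ| < δ}`; the alternatives `p = a`, `q = b` cover the case
of an empty outer piece. -/
theorem exists_split_of_le_deriv {ψ ψ' : ℝ → ℝ} {a b lam δ : ℝ} (hab : a ≤ b) (hlam : 0 < lam)
    (hδ : 0 < δ) (hd : ∀ ξ, HasDerivAt ψ (ψ' ξ) ξ) (hψ' : ∀ ξ ∈ Icc a b, lam ≤ ψ' ξ) :
    ∃ p q, a ≤ p ∧ p ≤ q ∧ q ≤ b ∧ q - p ≤ 2 * δ / lam ∧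
      (p = a ∨ ∀ ξ ∈ Icc a p, δ ≤ |ψ ξ|) ∧ (q = b ∨ ∀ ξ ∈ Icc q b, δ ≤ |ψ ξ|) := by
  have hc : ContinuousOn ψ (Icc a b) := fun ξ _ => (hd ξ).continuousAt.continuousWithinAt
  have hgrow : ∀ x ∈ Icc a b, ∀ y ∈ Icc a b, x ≤ y → lam * (y - x) ≤ ψ y - ψ x :=
    (convex_Icc a b).mul_sub_le_image_sub_of_le_deriv hc
      (fun ξ _ => (hd ξ).differentiableAt.differentiableWithinAt)
      (fun ξ hξ => (hd ξ).deriv ▸ hψ' ξ (interior_subset hξ))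
  have hm : MonotoneOn ψ (Icc a b) := fun x hx y hy hxy => by
    nlinarith [hgrow x hx y hy hxy]
  obtain ⟨p, hp, hpa, hpb⟩ := hm.exists_level_crossing (-δ) hab hc
  obtain ⟨q, hq, hqa, hqb⟩ := hm.exists_level_crossing δ hab hc
  have hpq : p ≤ q := by
    by_contra! hqp
    rcases hpa with rfl | hpa
    · exact absurd hq.1 (not_le.2 hqp)
    rcases hqb with rfl | hqb
    · exact absurd hp.2 (not_le.2 hqp)
    linarith [hpa q ⟨hq.1, hqp.le⟩, hqb q ⟨le_rfl, hq.2⟩]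
  refine ⟨p, q, hp.1, hpq, hq.2, ?_, ?_, ?_⟩
  · rcases hpq.eq_or_lt with rfl | hlt
    · rw [sub_self]; positivity
    have hψp : -δ ≤ ψ p := (hpb.resolve_left (hlt.trans_le hq.2).ne) p ⟨le_rfl, hp.2⟩
    have hψq : ψ q ≤ δ := (hqa.resolve_left (hp.1.trans_lt hlt).ne') q ⟨hq.1, le_rfl⟩
    rw [le_div_iff₀ hlam]
    nlinarith [hgrow p hp q hq hpq]
  · exact hpa.imp_right fun h ξ hξ => le_abs.2 (Or.inr (by linarith [h ξ hξ]))
  · exact hqb.imp_right fun h ξ hξ => le_abs.2 (Or.inl (h ξ hξ))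

theorem exists_split_of_le_abs_deriv {ψ ψ' : ℝ → ℝ} {a b lam δ : ℝ} (hab : a ≤ b)
    (hlam : 0 < lam) (hδ : 0 < δ) (hd : ∀ ξ, HasDerivAt ψ (ψ' ξ) ξ) (hc : Continuous ψ')
    (hψ' : ∀ ξ ∈ Icc a b, lam ≤ |ψ' ξ|) :
    ∃ p q, a ≤ p ∧ p ≤ q ∧ q ≤ b ∧ q - p ≤ 2 * δ / lam ∧
      (p = a ∨ ∀ ξ ∈ Icc a p, δ ≤ |ψ ξ|) ∧ (q = b ∨ ∀ ξ ∈ Icc q b, δ ≤ |ψ ξ|) := by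
  rcases forall_le_or_forall_le_neg_of_le_abs hc.continuousOn hlam hψ' with h | h
  · exact exists_split_of_le_deriv hab hlam hδ hd h
  · simpa only [Pi.neg_apply, abs_neg] using exists_split_of_le_deriv (ψ := -ψ) hab hlam hδ
      (fun ξ => (hd ξ).neg) fun ξ hξ => le_neg.1 (h ξ hξ)

section

variable {E : Type*} [NormedAddCommGroup E] [NormedSpace ℝ E]

/-- Splitting lemma of van der Corput: the integral is cut where `|ψ| < δ`, and that short piece
is estimated trivially. -/
theorem norm_integral_le_of_le_abs_deriv {f : ℝ → E} {ψ ψ' : ℝ → ℝ} {a b lam δ B : ℝ}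
    (hab : a ≤ b) (hlam : 0 < lam) (hδ : 0 < δ) (hB : 0 ≤ B)
    (hf : Continuous f) (hf1 : ∀ ξ, ‖f ξ‖ ≤ 1)
    (hd : ∀ ξ, HasDerivAt ψ (ψ' ξ) ξ) (hc : Continuous ψ') (hψ' : ∀ ξ ∈ Icc a b, lam ≤ |ψ' ξ|)
    (hside : ∀ p q, a ≤ p → p ≤ q → q ≤ b → (∀ ξ ∈ Icc p q, δ ≤ |ψ ξ|) →
      ‖∫ ξ in p..q, f ξ‖ ≤ B) :
    ‖∫ ξ in a..b, f ξ‖ ≤ 2 * δ / lam + 2 * B := by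
  obtain ⟨p, q, hap, hpq, hqb, hlen, hp, hq⟩ :=
    exists_split_of_le_abs_deriv hab hlam hδ hd hc hψ'
  have hleft : ‖∫ ξ in a..p, f ξ‖ ≤ B := by
    rcases hp with rfl | h
    · simpa using hB
    · exact hside a p le_rfl hap (hpq.trans hqb) h
  have hright : ‖∫ ξ in q..b, f ξ‖ ≤ B := by
    rcases hq with rfl | h
    · simpa using hB
    · exact hside q b (hap.trans hpq) hqb le_rfl h
  have hmid : ‖∫ ξ in p..q, f ξ‖ ≤ 2 * δ / lam := by
    have := norm_integral_le_of_norm_le_const (a := p) (b := q) fun ξ _ => hf1 ξ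
    rw [one_mul, abs_of_nonneg (sub_nonneg.2 hpq)] at this
    exact this.trans hlen
  rw [← integral_add_adjacent_intervals (hf.intervalIntegrable a p) (hf.intervalIntegrable p b),
    ← integral_add_adjacent_intervals (hf.intervalIntegrable p q) (hf.intervalIntegrable q b),
    ← add_assoc]
  exact norm_add₃_le.trans (by linarith)

theorem norm_integral_le_of_forall_short_subinterval {f : ℝ → E} {a b η B : ℝ} (hab : a ≤ b)
    (hη : 0 < η) (hf : Continuous f)
    (h : ∀ p q, a ≤ p → p ≤ q → q ≤ b → q - p < η → ‖∫ ξ in p..q, f ξ‖ ≤ B) :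
    ‖∫ ξ in a..b, f ξ‖ ≤ (⌈(b - a) / η⌉₊ + 1) * B := by
  set n : ℕ := ⌈(b - a) / η⌉₊ + 1
  have hn : (0 : ℝ) < n := by positivity
  have hstep0 : 0 ≤ (b - a) / n := div_nonneg (sub_nonneg.2 hab) hn.le
  have hstep : (b - a) / n < η := by
    rw [div_lt_iff₀ hn, ← div_lt_iff₀' hη]
    exact (Nat.le_ceil _).trans_lt (by simp [n])
  set X : ℕ → ℝ := fun i => a + i * ((b - a) / n)
  have hXmem : ∀ i ≤ n, a ≤ X i ∧ X i ≤ b := by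
    intro i hi
    have hi' : (i : ℝ) ≤ n := by exact_mod_cast hi
    refine ⟨le_add_of_nonneg_right (mul_nonneg i.cast_nonneg hstep0), ?_⟩
    calc a + i * ((b - a) / n) ≤ a + n * ((b - a) / n) := by gcongr
      _ = b := by field_simp; ring
  have hpiece : ∀ i < n, ‖∫ ξ in X i..X (i + 1), f ξ‖ ≤ B := by
    intro i hi
    have hXs : X (i + 1) - X i = (b - a) / n := by simp only [X]; push_cast; ring
    exact h _ _ (hXmem i hi.le).1 (by linarith)
      (hXmem (i + 1) hi).2 (hXs ▸ hstep)
  have hX0 : X 0 = a := by simp [X]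
  have hXn : X n = b := by simp only [X]; field_simp; ring
  have hsum := sum_integral_adjacent_intervals (μ := volume) (a := X) (n := n) fun i _ =>
    hf.intervalIntegrable _ _
  rw [hX0, hXn] at hsum
  rw [← hsum]
  calc _ ≤ ∑ i ∈ Finset.range n, ‖∫ ξ in X i..X (i + 1), f ξ‖ := norm_sum_le _ _
    _ ≤ ∑ _i ∈ Finset.range n, B := Finset.sum_le_sum fun i hi => hpiece i (Finset.mem_range.1 hi)
    _ = n * B := by simp
    _ = _ := by simp [n]

end

theorem exists_forall_le_abs_or_forall_le_abs {g h : ℝ → ℝ} {a b : ℝ}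
    (hg : ContinuousOn g (Icc a b)) (hh : ContinuousOn h (Icc a b))
    (hgh : ∀ ξ ∈ Icc a b, g ξ ≠ 0 ∨ h ξ ≠ 0) :
    ∃ c > 0, ∃ η > 0, ∀ p q, a ≤ p → p ≤ q → q ≤ b → q - p < η →
      (∀ ξ ∈ Icc p q, c ≤ |g ξ|) ∨ (∀ ξ ∈ Icc p q, c ≤ |h ξ|) := by
  obtain ⟨m, hm, hmin⟩ := isCompact_Icc.exists_forall_le' (a := 0)
    (f := fun ξ => max |g ξ| |h ξ|) (by fun_prop) fun ξ hξ => by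
      rcases hgh ξ hξ with h0 | h0
      · exact lt_max_of_lt_left (abs_pos.2 h0)
      · exact lt_max_of_lt_right (abs_pos.2 h0)
  have hstay : ∀ k : ℝ → ℝ, ContinuousOn k (Icc a b) → ∃ η > 0, ∀ p q, a ≤ p → p ≤ q → q ≤ b →
      q - p < η → m ≤ |k p| → ∀ ξ ∈ Icc p q, m / 2 ≤ |k ξ| := by
    intro k hk
    obtain ⟨η, hη, hkη⟩ := Metric.uniformContinuousOn_iff.1
      (isCompact_Icc.uniformContinuousOn_of_continuous hk) (m / 2) (half_pos hm)
    refine ⟨η, hη, fun p q hap hpq hqb hlen hkp ξ hξ => ?_⟩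
    have hclose := hkη ξ ⟨hap.trans hξ.1, hξ.2.trans hqb⟩ p ⟨hap, hpq.trans hqb⟩
      (by rw [Real.dist_eq, abs_of_nonneg (sub_nonneg.2 hξ.1)]; linarith [hξ.2])
    rw [Real.dist_eq] at hclose
    linarith [abs_sub_abs_le_abs_sub (k p) (k ξ), abs_sub_comm (k p) (k ξ)]
  obtain ⟨ηg, hηg, hg'⟩ := hstay g hg
  obtain ⟨ηh, hηh, hh'⟩ := hstay h hh
  refine ⟨m / 2, half_pos hm, min ηg ηh, lt_min hηg hηh, fun p q hap hpq hqb hlen => ?_⟩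
  rcases le_max_iff.1 (hmin p ⟨hap, hpq.trans hqb⟩) with hp | hp
  · exact Or.inl (hg' p q hap hpq hqb (hlen.trans_le (min_le_left _ _)) hp)
  · exact Or.inr (hh' p q hap hpq hqb (hlen.trans_le (min_le_right _ _)) hp)

theorem integral_abs_eq_abs_sub_of_hasDerivAt {g g' : ℝ → ℝ} {a b : ℝ} (hab : a ≤ b)
    (hd : ∀ ξ ∈ Icc a b, HasDerivAt g (g' ξ) ξ) (hint : IntervalIntegrable g' volume a b)
    (hsign : (∀ ξ ∈ Icc a b, 0 ≤ g' ξ) ∨ (∀ ξ ∈ Icc a b, g' ξ ≤ 0)) :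
    ∫ ξ in a..b, |g' ξ| = |g b - g a| := by
  rw [← integral_eq_sub_of_hasDerivAt (fun ξ hξ => hd ξ (uIcc_of_le hab ▸ hξ)) hint]
  rcases hsign with h | h
  · rw [abs_of_nonneg (integral_nonneg hab h)]
    exact integral_congr fun ξ hξ => abs_of_nonneg (h ξ (uIcc_of_le hab ▸ hξ))
  · have hneg := integral_nonneg (μ := volume) hab fun ξ hξ => neg_nonneg.2 (h ξ hξ)
    rw [intervalIntegral.integral_neg, neg_nonneg] at hneg
    rw [abs_of_nonpos hneg, ← intervalIntegral.integral_neg]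
    exact integral_congr fun ξ hξ => abs_of_nonpos (h ξ (uIcc_of_le hab ▸ hξ))

/-- Integration by parts against `1 / (i φ') = -i / φ'`. -/
theorem integral_cexp_I_mul_eq_of_deriv_ne_zero {φ φ' φ'' : ℝ → ℝ} {a b : ℝ} (hab : a ≤ b)
    (hd1 : ∀ ξ, HasDerivAt φ (φ' ξ) ξ) (hd2 : ∀ ξ, HasDerivAt φ' (φ'' ξ) ξ)
    (hc2 : Continuous φ'') (hne : ∀ ξ ∈ Icc a b, φ' ξ ≠ 0) :
    ∫ ξ in a..b, Complex.exp (Complex.I * φ ξ) =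
      -Complex.I * ((φ' b)⁻¹ : ℝ) * Complex.exp (Complex.I * φ b)
        - -Complex.I * ((φ' a)⁻¹ : ℝ) * Complex.exp (Complex.I * φ a)
        - ∫ ξ in a..b, -Complex.I * (-φ'' ξ / φ' ξ ^ 2 : ℝ) * Complex.exp (Complex.I * φ ξ) := by
  have hc0 : Continuous φ := continuous_iff_continuousAt.2 fun ξ => (hd1 ξ).continuousAt
  have hc1 : Continuous φ' := continuous_iff_continuousAt.2 fun ξ => (hd2 ξ).continuousAt
  have hne' : ∀ ξ ∈ uIcc a b, φ' ξ ≠ 0 := fun ξ hξ => hne ξ (uIcc_of_le hab ▸ hξ)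
  have hu'c : ContinuousOn (fun ξ => -Complex.I * (-φ'' ξ / φ' ξ ^ 2 : ℝ)) (uIcc a b) :=
    continuousOn_const.mul (Complex.continuous_ofReal.comp_continuousOn
      (hc2.neg.continuousOn.div (hc1.pow 2).continuousOn fun ξ hξ => pow_ne_zero 2 (hne' ξ hξ)))
  have hv'c : Continuous fun ξ => Complex.exp (Complex.I * φ ξ) * (Complex.I * φ' ξ) := by
    fun_prop
  refine (integral_congr fun ξ hξ => ?_).trans (intervalIntegral.integral_mul_deriv_eq_deriv_mul
    (u := fun ξ => -Complex.I * ((φ' ξ)⁻¹ : ℝ))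
    (fun ξ hξ => ((hd2 ξ).inv (hne' ξ hξ)).ofReal_comp.const_mul (-Complex.I))
    (fun ξ _ => ((hd1 ξ).ofReal_comp.const_mul Complex.I).cexp) hu'c.intervalIntegrable
    (hv'c.intervalIntegrable a b))
  have : (φ' ξ : ℂ) ≠ 0 := Complex.ofReal_ne_zero.2 (hne' ξ hξ)
  simp only [Complex.ofReal_inv]
  field_simp
  ring_nf
  rw [Complex.I_sq]
  ring

theorem norm_neg_I_mul_ofReal_mul_cexp (r s : ℝ) :
    ‖-Complex.I * r * Complex.exp (Complex.I * s)‖ = |r| := by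
  simp [Complex.norm_exp_I_mul_ofReal]

theorem norm_integral_cexp_le_of_le_abs_deriv {φ φ' φ'' : ℝ → ℝ} {a b δ : ℝ} (hab : a ≤ b)
    (hδ : 0 < δ) (hd1 : ∀ ξ, HasDerivAt φ (φ' ξ) ξ) (hd2 : ∀ ξ, HasDerivAt φ' (φ'' ξ) ξ)
    (hc2 : Continuous φ'') (hφ' : ∀ ξ ∈ Icc a b, δ ≤ |φ' ξ|)
    (hφ'' : (∀ ξ ∈ Icc a b, 0 ≤ φ'' ξ) ∨ (∀ ξ ∈ Icc a b, φ'' ξ ≤ 0)) :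
    ‖∫ ξ in a..b, Complex.exp (Complex.I * φ ξ)‖ ≤ 4 / δ := by
  have hc1 : Continuous φ' := continuous_iff_continuousAt.2 fun ξ => (hd2 ξ).continuousAt
  have hne : ∀ ξ ∈ Icc a b, φ' ξ ≠ 0 := fun ξ hξ => abs_pos.1 (hδ.trans_le (hφ' ξ hξ))
  have hinv : ∀ ξ ∈ Icc a b, |(φ' ξ)⁻¹| ≤ 1 / δ := fun ξ hξ => by
    rw [abs_inv, one_div]; exact inv_anti₀ hδ (hφ' ξ hξ)
  have ha := left_mem_Icc.2 hab
  have hb := right_mem_Icc.2 hab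
  have hvar : ‖∫ ξ in a..b,
      -Complex.I * (-φ'' ξ / φ' ξ ^ 2 : ℝ) * Complex.exp (Complex.I * φ ξ)‖ ≤ 2 / δ := calc
    _ ≤ ∫ ξ in a..b,
        ‖-Complex.I * (-φ'' ξ / φ' ξ ^ 2 : ℝ) * Complex.exp (Complex.I * φ ξ)‖ :=
      intervalIntegral.norm_integral_le_integral_norm hab
    _ = ∫ ξ in a..b, |-φ'' ξ / φ' ξ ^ 2| := by simp only [norm_neg_I_mul_ofReal_mul_cexp]
    _ = |(φ' b)⁻¹ - (φ' a)⁻¹| := by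
      refine integral_abs_eq_abs_sub_of_hasDerivAt hab (fun ξ hξ => (hd2 ξ).inv (hne ξ hξ))
        ((hc2.neg.continuousOn.div (hc1.pow 2).continuousOn
          fun ξ hξ => pow_ne_zero 2 (hne ξ (uIcc_of_le hab ▸ hξ))).intervalIntegrable) ?_
      refine hφ''.symm.imp (fun h ξ hξ => ?_) (fun h ξ hξ => ?_)
      · exact div_nonneg (neg_nonneg.2 (h ξ hξ)) (sq_nonneg _)
      · exact div_nonpos_of_nonpos_of_nonneg (neg_nonpos.2 (h ξ hξ)) (sq_nonneg _)
    _ ≤ 1 / δ + 1 / δ := (abs_sub _ _).trans (add_le_add (hinv b hb) (hinv a ha))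
    _ = 2 / δ := by ring
  rw [integral_cexp_I_mul_eq_of_deriv_ne_zero hab hd1 hd2 hc2 hne]
  calc _ ≤ ‖-Complex.I * ((φ' b)⁻¹ : ℝ) * Complex.exp (Complex.I * φ b)‖
        + ‖-Complex.I * ((φ' a)⁻¹ : ℝ) * Complex.exp (Complex.I * φ a)‖
        + ‖∫ ξ in a..b,
          -Complex.I * (-φ'' ξ / φ' ξ ^ 2 : ℝ) * Complex.exp (Complex.I * φ ξ)‖ :=
        (norm_sub_le _ _).trans (by gcongr; exact norm_sub_le _ _)
    _ ≤ 1 / δ + 1 / δ + 2 / δ := by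
      simp only [norm_neg_I_mul_ofReal_mul_cexp]
      gcongr
      exacts [hinv b hb, hinv a ha]
    _ = 4 / δ := by ring

theorem norm_integral_cexp_le_of_le_abs_deriv2 {φ φ' φ'' : ℝ → ℝ} {a b lam : ℝ} (hab : a ≤ b)
    (hlam : 0 < lam) (hd1 : ∀ ξ, HasDerivAt φ (φ' ξ) ξ) (hd2 : ∀ ξ, HasDerivAt φ' (φ'' ξ) ξ)
    (hc2 : Continuous φ'') (hφ'' : ∀ ξ ∈ Icc a b, lam ≤ |φ'' ξ|) :
    ‖∫ ξ in a..b, Complex.exp (Complex.I * φ ξ)‖ ≤ 10 / √lam := by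
  have hs : 0 < √lam := Real.sqrt_pos.2 hlam
  have hc0 : Continuous φ := continuous_iff_continuousAt.2 fun ξ => (hd1 ξ).continuousAt
  have hsign := (forall_le_or_forall_le_neg_of_le_abs hc2.continuousOn hlam hφ'').imp
    (fun h ξ hξ => hlam.le.trans (h ξ hξ)) (fun h ξ hξ => (h ξ hξ).trans (neg_nonpos.2 hlam.le))
  have hsplit := norm_integral_le_of_le_abs_deriv (f := fun ξ => Complex.exp (Complex.I * φ ξ))
    (δ := √lam) (B := 4 / √lam) hab hlam hs (by positivity) (by fun_prop)
    (fun ξ => (Complex.norm_exp_I_mul_ofReal _).le) hd2 hc2 hφ''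
    fun p q hap hpq hqb h => norm_integral_cexp_le_of_le_abs_deriv hpq hs hd1 hd2 hc2 h
      (hsign.imp (fun h' ξ hξ => h' ξ (Icc_subset_Icc hap hqb hξ))
        (fun h' ξ hξ => h' ξ (Icc_subset_Icc hap hqb hξ)))
  convert hsplit using 1
  field_simp
  rw [Real.sq_sqrt hlam.le]
  ring

theorem norm_integral_cexp_le_of_le_abs_deriv3 {φ φ' φ'' φ''' : ℝ → ℝ} {a b lam : ℝ}
    (hab : a ≤ b) (hlam : 0 < lam) (hd1 : ∀ ξ, HasDerivAt φ (φ' ξ) ξ)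
    (hd2 : ∀ ξ, HasDerivAt φ' (φ'' ξ) ξ) (hd3 : ∀ ξ, HasDerivAt φ'' (φ''' ξ) ξ)
    (hc3 : Continuous φ''') (hφ''' : ∀ ξ ∈ Icc a b, lam ≤ |φ''' ξ|) :
    ‖∫ ξ in a..b, Complex.exp (Complex.I * φ ξ)‖ ≤ 22 * lam ^ (-(1 / 3) : ℝ) := by
  -- this `δ` balances the two terms `2 δ / lam` and `2 * (10 / √δ)` of the splitting bound
  set δ := lam ^ (2 / 3 : ℝ)
  have hδ : 0 < δ := Real.rpow_pos_of_pos hlam _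
  have hc0 : Continuous φ := continuous_iff_continuousAt.2 fun ξ => (hd1 ξ).continuousAt
  have hc2 : Continuous φ'' := continuous_iff_continuousAt.2 fun ξ => (hd3 ξ).continuousAt
  have hsplit := norm_integral_le_of_le_abs_deriv (f := fun ξ => Complex.exp (Complex.I * φ ξ))
    (δ := δ) (B := 10 / √δ) hab hlam hδ (by positivity) (by fun_prop)
    (fun ξ => (Complex.norm_exp_I_mul_ofReal _).le) hd3 hc3 hφ'''
    fun p q _ hpq _ h => norm_integral_cexp_le_of_le_abs_deriv2 hpq hδ hd1 hd2 hc2 h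
  have hδlam : δ / lam = lam ^ (-(1 / 3) : ℝ) := by
    rw [← Real.rpow_sub_one hlam.ne']; norm_num
  have hsqrt : 1 / √δ = lam ^ (-(1 / 3) : ℝ) := by
    rw [Real.sqrt_eq_rpow, ← Real.rpow_mul hlam.le, one_div, ← Real.rpow_neg hlam.le]; norm_num
  convert hsplit using 1
  rw [mul_div_assoc, hδlam, div_eq_mul_one_div 10, hsqrt]
  ring

theorem norm_integral_cexp_le_of_le_abs_deriv2_or_deriv3 {φ φ' φ'' φ''' : ℝ → ℝ} {a b lam : ℝ}
    (hab : a ≤ b) (hlam : 1 ≤ lam) (hd1 : ∀ ξ, HasDerivAt φ (φ' ξ) ξ)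
    (hd2 : ∀ ξ, HasDerivAt φ' (φ'' ξ) ξ) (hd3 : ∀ ξ, HasDerivAt φ'' (φ''' ξ) ξ)
    (hc3 : Continuous φ''')
    (h : (∀ ξ ∈ Icc a b, lam ≤ |φ'' ξ|) ∨ (∀ ξ ∈ Icc a b, lam ≤ |φ''' ξ|)) :
    ‖∫ ξ in a..b, Complex.exp (Complex.I * φ ξ)‖ ≤ 22 * lam ^ (-(1 / 3) : ℝ) := by
  have hlam0 : 0 < lam := one_pos.trans_le hlam
  rcases h with h | h
  · have hc2 : Continuous φ'' := continuous_iff_continuousAt.2 fun ξ => (hd3 ξ).continuousAt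
    calc _ ≤ 10 / √lam := norm_integral_cexp_le_of_le_abs_deriv2 hab hlam0 hd1 hd2 hc2 h
      _ = 10 * lam ^ (-(1 / 2) : ℝ) := by
        rw [Real.sqrt_eq_rpow, Real.rpow_neg hlam0.le, div_eq_mul_inv]
      _ ≤ 22 * lam ^ (-(1 / 3) : ℝ) :=
        mul_le_mul (by norm_num) (Real.rpow_le_rpow_of_exponent_le hlam (by norm_num))
          (by positivity) (by norm_num)
  · exact norm_integral_cexp_le_of_le_abs_deriv3 hab hlam0 hd1 hd2 hd3 hc3 h

theorem le_mul_one_add_rpow_neg {y c s t A K : ℝ} (hc : 0 < c) (hs : 0 ≤ s) (hA : 0 ≤ A)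
    (hK : 0 ≤ K) (hyA : y ≤ A) (hyK : 1 ≤ c * |t| → y ≤ K * (c * |t|) ^ (-s)) :
    y ≤ (A + K) * (1 + c⁻¹) ^ s * (1 + |t|) ^ (-s) := by
  set k := 1 + c⁻¹
  have hk : 0 < k := by positivity
  have hu : 0 < 1 + |t| := by positivity
  have hkk : k ^ s * k ^ (-s) = 1 := by rw [← Real.rpow_add hk, add_neg_cancel, Real.rpow_zero]
  rcases le_or_gt 1 (c * |t|) with hct | hct
  · have hle : 1 + |t| ≤ k * (c * |t|) := by
      simp only [k]
      rw [add_mul, one_mul, inv_mul_cancel_left₀ hc.ne']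
      linarith
    have hdecay : (c * |t|) ^ (-s) ≤ k ^ s * (1 + |t|) ^ (-s) := calc
      (c * |t|) ^ (-s) = k ^ s * (k * (c * |t|)) ^ (-s) := by
        rw [Real.mul_rpow hk.le (by positivity), ← mul_assoc, hkk, one_mul]
      _ ≤ k ^ s * (1 + |t|) ^ (-s) := mul_le_mul_of_nonneg_left
        (Real.rpow_le_rpow_of_nonpos hu hle (neg_nonpos.2 hs)) (by positivity)
    calc y ≤ K * (c * |t|) ^ (-s) := hyK hct
      _ ≤ K * (k ^ s * (1 + |t|) ^ (-s)) := mul_le_mul_of_nonneg_left hdecay hK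
      _ ≤ (A + K) * k ^ s * (1 + |t|) ^ (-s) := by
        rw [mul_assoc]; gcongr; linarith
  · have hlt : 1 + |t| ≤ k := by
      have : |t| ≤ 1 / c := (le_div_iff₀' hc).2 hct.le
      simp only [k, ← one_div]; linarith
    have hone : 1 ≤ k ^ s * (1 + |t|) ^ (-s) := hkk.symm.trans_le <|
      mul_le_mul_of_nonneg_left (Real.rpow_le_rpow_of_nonpos hu hlt (neg_nonpos.2 hs))
        (by positivity)
    calc y ≤ A * 1 := by rw [mul_one]; exact hyA
      _ ≤ (A + K) * (k ^ s * (1 + |t|) ^ (-s)) :=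
        mul_le_mul (by linarith) hone zero_le_one (by linarith)
      _ = (A + K) * k ^ s * (1 + |t|) ^ (-s) := by ring

noncomputable def dispersion (γ ξ : ℝ) : ℝ :=
  (2 - 2 * Real.cos ξ) ^ 2 + γ * (2 - 2 * Real.cos ξ)

noncomputable def dispersion₁ (γ ξ : ℝ) : ℝ := 2 * Real.sin ξ * (4 - 4 * Real.cos ξ + γ)

noncomputable def dispersion₂ (γ ξ : ℝ) : ℝ :=
  8 + (8 + 2 * γ) * Real.cos ξ - 16 * Real.cos ξ ^ 2

noncomputable def dispersion₃ (γ ξ : ℝ) : ℝ := 2 * Real.sin ξ * (16 * Real.cos ξ - 4 - γ)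

theorem hasDerivAt_dispersion (γ ξ : ℝ) : HasDerivAt (dispersion γ) (dispersion₁ γ ξ) ξ := by
  have h := ((Real.hasDerivAt_cos ξ).const_mul 2).const_sub 2
  refine ((h.pow 2).add (h.const_mul γ)).congr_deriv ?_
  simp only [dispersion₁]
  push_cast
  ring

theorem hasDerivAt_dispersion₁ (γ ξ : ℝ) : HasDerivAt (dispersion₁ γ) (dispersion₂ γ ξ) ξ := by
  have h := (((Real.hasDerivAt_cos ξ).const_mul 4).const_sub 4).add_const γ
  refine (((Real.hasDerivAt_sin ξ).const_mul 2).mul h).congr_deriv ?_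
  simp only [dispersion₂]
  linear_combination (8 : ℝ) * Real.sin_sq_add_cos_sq ξ

theorem hasDerivAt_dispersion₂ (γ ξ : ℝ) : HasDerivAt (dispersion₂ γ) (dispersion₃ γ ξ) ξ := by
  have h := Real.hasDerivAt_cos ξ
  refine (((h.const_mul (8 + 2 * γ)).const_add 8).sub ((h.pow 2).const_mul 16)).congr_deriv ?_
  simp only [dispersion₃]
  push_cast
  ring

theorem continuous_dispersion (γ : ℝ) : Continuous (dispersion γ) := by
  unfold dispersion; fun_prop

theorem continuous_dispersion₂ (γ : ℝ) : Continuous (dispersion₂ γ) := by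
  unfold dispersion₂; fun_prop

theorem continuous_dispersion₃ (γ : ℝ) : Continuous (dispersion₃ γ) := by
  unfold dispersion₃; fun_prop

theorem dispersion₂_ne_zero_or_dispersion₃_ne_zero {γ : ℝ} (h8 : γ ≠ -8) (h0 : γ ≠ 0) (ξ : ℝ) :
    dispersion₂ γ ξ ≠ 0 ∨ dispersion₃ γ ξ ≠ 0 := by
  by_contra! h
  obtain ⟨h2, h3⟩ := h
  simp only [dispersion₂, dispersion₃] at h2 h3
  rcases mul_eq_zero.1 h3 with hs | hγ
  · have hs : Real.sin ξ = 0 := by simpa using hs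
    have hc : (Real.cos ξ - 1) * (Real.cos ξ + 1) = 0 := by
      linear_combination Real.sin_sq_add_cos_sq ξ - Real.sin ξ * hs
    rcases mul_eq_zero.1 hc with hc | hc
    · exact h0 (by linear_combination h2 / 2 + (8 * Real.cos ξ + 4 - γ) * hc)
    · exact h8 (by linear_combination -h2 / 2 + (γ - 8 * Real.cos ξ + 12) * hc)
  · have hγ' : γ = 16 * Real.cos ξ - 4 := by linarith
    rw [hγ'] at h2
    nlinarith [sq_nonneg (Real.cos ξ)]

theorem norm_integral_cexp_dispersion_le {γ c t a b : ℝ} (x : ℝ) (hab : a ≤ b)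
    (hct : 1 ≤ c * |t|)
    (h : (∀ ξ ∈ Icc a b, c ≤ |dispersion₂ γ ξ|) ∨ (∀ ξ ∈ Icc a b, c ≤ |dispersion₃ γ ξ|)) :
    ‖∫ ξ in a..b, Complex.exp (Complex.I * (x * ξ + dispersion γ ξ * t : ℝ))‖ ≤
      22 * (c * |t|) ^ (-(1 / 3) : ℝ) := by
  have hscale : ∀ {k : ℝ → ℝ}, (∀ ξ ∈ Icc a b, c ≤ |k ξ|) →
      ∀ ξ ∈ Icc a b, c * |t| ≤ |k ξ * t| := fun hk ξ hξ => by
    rw [abs_mul]; exact mul_le_mul_of_nonneg_right (hk ξ hξ) (abs_nonneg t)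
  have hd1 : ∀ ξ, HasDerivAt (fun ξ => x * ξ + dispersion γ ξ * t) (x + dispersion₁ γ ξ * t) ξ :=
    fun ξ => (((hasDerivAt_id ξ).const_mul x).fun_add
      ((hasDerivAt_dispersion γ ξ).mul_const t)).congr_deriv (by rw [mul_one])
  exact norm_integral_cexp_le_of_le_abs_deriv2_or_deriv3 hab hct hd1
    (fun ξ => ((hasDerivAt_dispersion₁ γ ξ).mul_const t).const_add x)
    (fun ξ => (hasDerivAt_dispersion₂ γ ξ).mul_const t)
    ((continuous_dispersion₃ γ).mul continuous_const) (h.imp hscale hscale)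

theorem norm_G1_le_norm_integral (γ : ℝ) (x : ℤ) (t : ℝ) :
    ‖G1 γ x t‖ ≤ ‖∫ ξ in (-Real.pi)..Real.pi,
      Complex.exp (Complex.I * ((x : ℝ) * ξ + dispersion γ ξ * t : ℝ))‖ := by
  rw [G1, norm_mul]
  refine mul_le_of_le_one_left (norm_nonneg _) ?_
  rw [Complex.norm_real, Real.norm_eq_abs, abs_inv, abs_of_pos Real.two_pi_pos]
  exact inv_le_one_of_one_le₀ (by linarith [Real.pi_gt_three])

theorem norm_G1_le_one (γ : ℝ) (x : ℤ) (t : ℝ) : ‖G1 γ x t‖ ≤ 1 := by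
  rw [G1, norm_mul, Complex.norm_real, Real.norm_eq_abs, abs_inv, abs_of_pos Real.two_pi_pos]
  have := norm_integral_le_of_norm_le_const (a := -Real.pi) (b := Real.pi) (C := 1)
    fun ξ _ => (Complex.norm_exp_I_mul_ofReal
      ((x : ℝ) * ξ + ((2 - 2 * Real.cos ξ) ^ 2 + γ * (2 - 2 * Real.cos ξ)) * t)).le
  rw [one_mul, sub_neg_eq_add, abs_of_pos (by linarith [Real.pi_pos]), ← two_mul] at this
  calc _ ≤ (2 * Real.pi)⁻¹ * (2 * Real.pi) := by gcongr
    _ = 1 := inv_mul_cancel₀ Real.two_pi_pos.ne'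

/-- For `γ ∈ outside {−8, 0}` the fundamental solution on `ℤ` decays like `(1+|t|)^{-1/3}`. -/
theorem stmt1 (γ : ℝ) (hγ : γ ≠ -8 ∧ γ ≠ 0) :
    ∃ C > (0 : ℝ), ∀ (x : ℤ) (t : ℝ),
      ‖G1 γ x t‖ ≤ C * (1 + |t|) ^ (-(1 / 3 : ℝ)) := by
  obtain ⟨c, hc, η, hη, hcover⟩ := exists_forall_le_abs_or_forall_le_abs
    (a := -Real.pi) (b := Real.pi) (continuous_dispersion₂ γ).continuousOn
    (continuous_dispersion₃ γ).continuousOn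
    fun ξ _ => dispersion₂_ne_zero_or_dispersion₃_ne_zero hγ.1 hγ.2 ξ
  set N : ℝ := ⌈(Real.pi - -Real.pi) / η⌉₊ + 1
  have hdecay : ∀ (x : ℤ) (t : ℝ), 1 ≤ c * |t| →
      ‖G1 γ x t‖ ≤ N * 22 * (c * |t|) ^ (-(1 / 3 : ℝ)) := fun x t hct => calc
    _ ≤ _ := norm_G1_le_norm_integral γ x t
    _ ≤ N * (22 * (c * |t|) ^ (-(1 / 3 : ℝ))) :=
      norm_integral_le_of_forall_short_subinterval (by linarith [Real.pi_pos]) hη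
        (by have := continuous_dispersion γ; fun_prop)
        fun p q hp hpq hq hlen => norm_integral_cexp_dispersion_le x hpq hct
          (hcover p q hp hpq hq hlen)
    _ = _ := by ring
  refine ⟨(1 + N * 22) * (1 + c⁻¹) ^ (1 / 3 : ℝ), by positivity, fun x t => ?_⟩
  exact le_mul_one_add_rpow_neg hc (by norm_num) zero_le_one (by positivity)
    (norm_G1_le_one γ x t) (hdecay x t)
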